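/- arXiv:2411.07454 — 4 statements merged into one kernel-verified Lean document; each statement's English description precedes it below -/
import Mathlib

section
/- Let C ⊆ [0,1] be a compact set with positive Lebesgue measure μ(C) > 0, and define φ(t) = μ(C ∩ [inf C, t]) / μ(C). Then φ restricted to C is Lipschitz with constant μ(C)⁻¹ and φ(C) = [0,1]. -/
/-!
Write `F t = μ(C ∩ [inf C, t])`. Since `C ∩ [inf C, t]` grows by at most an interval of length
`t - s` between `s` and `t`, `F` is `1`-Lipschitz, so `F / μ(C)` is `μ(C)⁻¹`-Lipschitz. For
surjectivity, the intermediate value theorem gives every value in `[0, μ(C)]` as `F x` for some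
`x ∈ [inf C, sup C]`, and `F` does not change between `x` and the last point of `C` before `x`.
-/

open MeasureTheory Set

noncomputable def partialVolume (C : Set ℝ) (a t : ℝ) : ℝ :=
  (volume (C ∩ Icc a t)).toReal

section partialVolume

variable (C : Set ℝ) (a : ℝ)

theorem volume_inter_Icc_ne_top (t : ℝ) : volume (C ∩ Icc a t) ≠ ⊤ :=
  ((measure_mono inter_subset_right).trans_lt measure_Icc_lt_top).ne

theorem partialVolume_mono : Monotone (partialVolume C a) := fun _ t hst =>
  ENNReal.toReal_mono (volume_inter_Icc_ne_top C a t)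
    (measure_mono (inter_subset_inter_right _ (Icc_subset_Icc_right hst)))

theorem partialVolume_le_add_sub {s t : ℝ} (hst : s ≤ t) :
    partialVolume C a t ≤ partialVolume C a s + (t - s) := by
  have hsplit : C ∩ Icc a t ⊆ (C ∩ Icc a s) ∪ Ioc s t := by
    rintro x ⟨hxC, hax, hxt⟩
    rcases le_or_gt x s with hxs | hsx
    · exact Or.inl ⟨hxC, hax, hxs⟩
    · exact Or.inr ⟨hsx, hxt⟩
  have hle : volume (C ∩ Icc a t) ≤ volume (C ∩ Icc a s) + ENNReal.ofReal (t - s) :=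
    calc volume (C ∩ Icc a t) ≤ volume ((C ∩ Icc a s) ∪ Ioc s t) := measure_mono hsplit
      _ ≤ volume (C ∩ Icc a s) + volume (Ioc s t) := measure_union_le _ _
      _ = volume (C ∩ Icc a s) + ENNReal.ofReal (t - s) := by rw [Real.volume_Ioc]
  have hs := volume_inter_Icc_ne_top C a s
  calc partialVolume C a t
      ≤ (volume (C ∩ Icc a s) + ENNReal.ofReal (t - s)).toReal :=
        ENNReal.toReal_mono (ENNReal.add_ne_top.2 ⟨hs, ENNReal.ofReal_ne_top⟩) hle
    _ = partialVolume C a s + (t - s) := by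
        rw [ENNReal.toReal_add hs ENNReal.ofReal_ne_top, ENNReal.toReal_ofReal (sub_nonneg.2 hst)]
        rfl

theorem partialVolume_lipschitzWith_one : LipschitzWith 1 (partialVolume C a) := by
  refine LipschitzWith.of_le_add fun t s => ?_
  rcases le_total s t with hst | hts
  · simpa [Real.dist_eq, abs_of_nonneg (sub_nonneg.2 hst)] using partialVolume_le_add_sub C a hst
  · exact (partialVolume_mono C a hts).trans (le_add_of_nonneg_right dist_nonneg)

theorem partialVolume_self : partialVolume C a a = 0 := by
  rw [partialVolume, Icc_self, measure_mono_null inter_subset_right (measure_singleton a),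
    ENNReal.toReal_zero]

theorem partialVolume_of_subset_Icc {b : ℝ} (h : C ⊆ Icc a b) :
    partialVolume C a b = (volume C).toReal := by
  rw [partialVolume, inter_eq_left.2 h]

theorem partialVolume_le_volume (hC : volume C ≠ ⊤) (t : ℝ) :
    partialVolume C a t ≤ (volume C).toReal :=
  ENNReal.toReal_mono hC (measure_mono inter_subset_left)

theorem IsCompact.exists_mem_partialVolume_eq {C : Set ℝ} (hC : IsCompact C) {a x : ℝ}
    (ha : a ∈ C) (hax : a ≤ x) : ∃ c ∈ C, partialVolume C a c = partialVolume C a x := by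
  set c := sSup (C ∩ Icc a x)
  have hc : c ∈ C ∩ Icc a x := (hC.inter_right isClosed_Icc).sSup_mem ⟨a, ha, le_rfl, hax⟩
  have hbdd : BddAbove (C ∩ Icc a x) := hC.bddAbove.mono inter_subset_left
  have hgap : C ∩ Icc a x = C ∩ Icc a c := by
    ext y
    exact ⟨fun hy => ⟨hy.1, hy.2.1, le_csSup hbdd hy⟩, fun hy => ⟨hy.1, hy.2.1, hy.2.2.trans hc.2.2⟩⟩
  exact ⟨c, hc.1, by rw [partialVolume, partialVolume, hgap]⟩

theorem IsCompact.partialVolume_image_eq_Icc {C : Set ℝ} (hC : IsCompact C) (hne : C.Nonempty) :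
    partialVolume C (sInf C) '' C = Icc 0 (volume C).toReal := by
  refine Subset.antisymm ?_ fun y hy => ?_
  · rintro _ ⟨t, -, rfl⟩
    exact ⟨ENNReal.toReal_nonneg, partialVolume_le_volume C _ hC.measure_lt_top.ne t⟩
  have hinf : sInf C ∈ C := hC.sInf_mem hne
  have hab : sInf C ≤ sSup C := csInf_le_csSup hne hC.bddBelow hC.bddAbove
  have hCsub : C ⊆ Icc (sInf C) (sSup C) := fun x hx =>
    ⟨csInf_le hC.bddBelow hx, le_csSup hC.bddAbove hx⟩
  obtain ⟨x, hx, rfl⟩ : y ∈ partialVolume C (sInf C) '' Icc (sInf C) (sSup C) := by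
    refine intermediate_value_Icc hab
      (partialVolume_lipschitzWith_one C _).continuous.continuousOn ?_
    rwa [partialVolume_self, partialVolume_of_subset_Icc C _ hCsub]
  exact hC.exists_mem_partialVolume_eq hinf hx.1

end partialVolume

theorem cantor_map_lipschitz_surjective_general (C : Set ℝ) (hC : IsCompact C)
    (hpos : 0 < volume C) :
    LipschitzOnWith (volume C).toNNReal⁻¹
      (fun t => (volume (C ∩ Set.Icc (sInf C) t)).toReal / (volume C).toReal) C ∧
    (fun t => (volume (C ∩ Set.Icc (sInf C) t)).toReal / (volume C).toReal) '' C
      = Set.Icc (0 : ℝ) 1 := by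
  set m := (volume C).toReal
  have hm : 0 < m := ENNReal.toReal_pos hpos.ne' hC.measure_lt_top.ne
  change LipschitzOnWith _ (fun t => partialVolume C (sInf C) t / m) C ∧
    (fun t => partialVolume C (sInf C) t / m) '' C = Icc 0 1
  constructor
  · refine (LipschitzWith.of_le_add_mul _ fun t s => ?_).lipschitzOnWith
    have h := (partialVolume_lipschitzWith_one C (sInf C)).le_add_mul t s
    rw [NNReal.coe_one, one_mul] at h
    rw [NNReal.coe_inv, ENNReal.coe_toNNReal_eq_toReal]
    calc partialVolume C (sInf C) t / m ≤ (partialVolume C (sInf C) s + dist t s) / m := by gcongr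
      _ = partialVolume C (sInf C) s / m + m⁻¹ * dist t s := by ring
  · rw [← image_image (· / m) (partialVolume C (sInf C)),
      hC.partialVolume_image_eq_Icc (nonempty_of_measure_ne_zero hpos.ne')]
    simp_rw [div_eq_mul_inv]
    rw [image_mul_right_Icc' _ _ (inv_pos.2 hm), zero_mul, mul_inv_cancel₀ hm.ne']

theorem cantor_map_lipschitz_surjective (C : Set ℝ) (hC : IsCompact C)
    (hsub : C ⊆ Set.Icc 0 1) (hpos : 0 < volume C) :
    LipschitzOnWith (volume C).toNNReal⁻¹
      (fun t => (volume (C ∩ Set.Icc (sInf C) t)).toReal / (volume C).toReal) C ∧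
    (fun t => (volume (C ∩ Set.Icc (sInf C) t)).toReal / (volume C).toReal) '' C
      = Set.Icc (0 : ℝ) 1 :=
  cantor_map_lipschitz_surjective_general C hC hpos
end

section
/- Let X be a compact metric space, X₀ ⊆ X closed, and {X_j}_{j∈J} a family of closed subsets of X that is locally finite at every point of X \ X₀. Let M ⊆ X be closed and f : M → Y a continuous map to a metric space Y. Then the family {f(M ∩ X_j)}_{j∈J} is locally finite at every point of f(M) \ f(M ∩ X₀). -/
/-- A family of sets is locally finite at a point if some neighborhood of the point
meets only finitely many members of the family. -/
def LocallyFiniteAt {X : Type*} [TopologicalSpace X] {J : Type*} (F : J → Set X)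
    (x : X) : Prop :=
  ∃ U ∈ nhds x, {j : J | (F j ∩ U).Nonempty}.Finite

theorem image_family_locallyFiniteAt {X Y : Type*} [MetricSpace X] [CompactSpace X]
    [MetricSpace Y] {J : Type*} (X₀ : Set X) (hX₀ : IsClosed X₀)
    (Xf : J → Set X) (hXf : ∀ j, IsClosed (Xf j))
    (hloc : ∀ x ∈ X₀ᶜ, LocallyFiniteAt Xf x)
    (M : Set X) (hM : IsClosed M) (f : X → Y) (hf : ContinuousOn f M) :
    ∀ y ∈ f '' M \ f '' (M ∩ X₀), LocallyFiniteAt (fun j => f '' (M ∩ Xf j)) y := by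
  rintro y ⟨-, hy⟩
  -- f '' (M ∩ X₀) is compact, hence closed, and y ∉ it
  have hcomp : IsCompact (f '' (M ∩ X₀)) :=
    ((hM.inter hX₀).isCompact).image_of_continuousOn (hf.mono Set.inter_subset_left)
  have hclosed : IsClosed (f '' (M ∩ X₀)) := hcomp.isClosed
  obtain ⟨ε, hε, hball⟩ := Metric.isOpen_iff.1 hclosed.isOpen_compl y hy
  -- the compact set K
  set K : Set X := M ∩ f ⁻¹' Metric.closedBall y (ε / 2) with hK
  have hKclosed : IsClosed K :=
    hf.preimage_isClosed_of_isClosed hM Metric.isClosed_closedBall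
  have hKcomp : IsCompact K := hKclosed.isCompact
  have hKsub : K ⊆ X₀ᶜ := by
    rintro x ⟨hxM, hxb⟩ hx0
    have : f x ∈ f '' (M ∩ X₀) := ⟨x, ⟨hxM, hx0⟩, rfl⟩
    exact hball (Metric.closedBall_subset_ball (by linarith) hxb) this
  -- choose good neighborhoods
  choose U hU hUfin using fun x (hx : x ∈ K) => hloc x (hKsub hx)
  obtain ⟨t, htcover⟩ := hKcomp.elim_nhds_subcover' U hU
  refine ⟨Metric.ball y (ε / 2), Metric.ball_mem_nhds y (by linarith), ?_⟩
  have : {j : J | ((fun j => f '' (M ∩ Xf j)) j ∩ Metric.ball y (ε / 2)).Nonempty} ⊆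
      ⋃ x ∈ t, {j : J | (Xf j ∩ U x x.2).Nonempty} := by
    rintro j ⟨z, ⟨x, ⟨hxM, hxj⟩, rfl⟩, hzb⟩
    have hxK : x ∈ K := ⟨hxM, Metric.ball_subset_closedBall hzb⟩
    obtain ⟨x', hx't, hx'⟩ := Set.mem_iUnion₂.1 (htcover hxK)
    exact Set.mem_iUnion₂.2 ⟨x', hx't, ⟨x, hxj, hx'⟩⟩
  exact Set.Finite.subset (t.finite_toSet.biUnion fun x _ => hUfin x x.2) this
end

section
/- Let (X, d) be a metric space, ω ∈ X, and {X_j}_{j∈J} a family of subsets of X \ {ω}. Suppose there is a constant D ≥ 1 such that for all i ≠ j, Dist(X_i, X_j) ≤ D · dist(X_i, X_j), and for all j, Dist({ω}, X_j) ≤ D · dist({ω}, X_j), where dist and Dist denote the infimum and supremum of distances between the two sets. Let A_j ⊆ X_j and f_j : A_j → X_j be maps, each Lipschitz with constant L. Define f on {ω} ∪ ⋃_j A_j by f(ω) = ω and f = f_j on A_j. Then f is Lipschitz with constant max{L, D}. -/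
theorem glued_map_lipschitz {X : Type*} [MetricSpace X] {J : Type*}
    (ω : X) (Xf A : J → Set X) (f : X → X) (L D : NNReal)
    (hXω : ∀ j, ω ∉ Xf j)
    (hD : 1 ≤ D)
    -- Dist(X_i, X_j) ≤ D · dist(X_i, X_j) for i ≠ j
    (hbal : ∀ i j, i ≠ j → ∀ a ∈ Xf i, ∀ b ∈ Xf j, ∀ a' ∈ Xf i, ∀ b' ∈ Xf j,
      dist a b ≤ D * dist a' b')
    -- Dist({ω}, X_j) ≤ D · dist({ω}, X_j)
    (hbalω : ∀ j, ∀ a ∈ Xf j, ∀ a' ∈ Xf j, dist ω a ≤ D * dist ω a')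
    (hA : ∀ j, A j ⊆ Xf j)
    (hdisj : Pairwise (Function.onFun Disjoint A))
    (hfω : f ω = ω)
    (hmaps : ∀ j, Set.MapsTo f (A j) (Xf j))
    (hlip : ∀ j, LipschitzOnWith L f (A j)) :
    LipschitzOnWith (max L D) f ({ω} ∪ ⋃ j, A j) := by
  rw [lipschitzOnWith_iff_dist_le_mul]
  have hDle : (D : ℝ) ≤ (max L D : NNReal) := by
    exact_mod_cast le_max_right L D
  have hLle : (L : ℝ) ≤ (max L D : NNReal) := by
    exact_mod_cast le_max_left L D
  have key : ∀ j, ∀ y ∈ A j, dist (f ω) (f y) ≤ (max L D : NNReal) * dist ω y := by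
    intro j y hy
    rw [hfω]
    calc dist ω (f y) ≤ D * dist ω y :=
          hbalω j (f y) (hmaps j hy) y (hA j hy)
      _ ≤ (max L D : NNReal) * dist ω y := by
          apply mul_le_mul_of_nonneg_right hDle dist_nonneg
  intro x hx y hy
  rcases hx with hx | hx
  · rcases hy with hy | hy
    · simp at hx hy; subst hx; subst hy; simp
    · simp only [Set.mem_singleton_iff] at hx
      subst hx
      obtain ⟨j, hj⟩ := Set.mem_iUnion.mp hy
      exact key j y hj
  · obtain ⟨i, hi⟩ := Set.mem_iUnion.mp hx
    rcases hy with hy | hy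
    · simp only [Set.mem_singleton_iff] at hy
      rw [hy, dist_comm, dist_comm x ω]
      exact key i x hi
    · obtain ⟨j, hj⟩ := Set.mem_iUnion.mp hy
      by_cases hij : i = j
      · subst hij
        have := (lipschitzOnWith_iff_dist_le_mul.mp (hlip i)) x hi y hj
        calc dist (f x) (f y) ≤ L * dist x y := this
          _ ≤ (max L D : NNReal) * dist x y :=
            mul_le_mul_of_nonneg_right hLle dist_nonneg
      · calc dist (f x) (f y)
            ≤ D * dist x y :=
              hbal i j hij (f x) ((hmaps i) hi) (f y) ((hmaps j) hj) x (hA i hi) y (hA j hj)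
          _ ≤ (max L D : NNReal) * dist x y :=
            mul_le_mul_of_nonneg_right hDle dist_nonneg
end

section
/- Let f : Ordinal → Cardinal be a function satisfying: (i) f(β) ≤ ℵ₀ for all β < ω₁; (ii) f(β+1) ≤ f(β) · ℵ₀ for all β; (iii) for every limit ordinal α, f(α) ≤ (⨆_{β<α} f(β)) · |α|, where |α| is the cardinality of α. Then for every ordinal τ and every α < ω_{τ+1}, one has f(α) ≤ ℵ_τ. -/
open Cardinal

/-- `κ * κ = κ` absorbs both the factor `ℵ₀` and the factor `α.card ≤ κ`. -/
theorem le_of_card_le_of_succ_of_isSuccLimit {f : Ordinal → Cardinal} {κ : Cardinal}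
    (hκ : ℵ₀ ≤ κ) (h0 : f 0 ≤ κ) (hsucc : ∀ β, f (β + 1) ≤ f β * ℵ₀)
    (hlim : ∀ α : Ordinal, Order.IsSuccLimit α → f α ≤ (⨆ β : Set.Iio α, f β.1) * α.card) :
    ∀ α : Ordinal, α.card ≤ κ → f α ≤ κ := by
  intro α
  induction α using WellFoundedLT.induction with
  | ind α IH =>
    intro hα
    have IH' : ∀ β < α, f β ≤ κ := fun β hβ => IH β hβ ((Ordinal.card_le_card hβ.le).trans hα)
    rcases Ordinal.zero_or_succ_or_isSuccLimit α with rfl | ⟨β, rfl⟩ | hα_lim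
    · exact h0
    · calc f (β + 1) ≤ f β * ℵ₀ := hsucc β
        _ ≤ κ * κ := mul_le_mul' (IH' β (Order.lt_succ β)) hκ
        _ = κ := mul_eq_self hκ
    · calc f α ≤ (⨆ β : Set.Iio α, f β.1) * α.card := hlim α hα_lim
        _ ≤ κ * κ := mul_le_mul' (ciSup_le' fun β => IH' β.1 β.2) hα
        _ = κ := mul_eq_self hκ

theorem Ordinal.card_le_of_lt_ord_aleph_add_one {τ α : Ordinal} (hα : α < (aleph (τ + 1)).ord) :
    α.card ≤ aleph τ := by
  rwa [lt_ord, ← succ_aleph, Order.lt_succ_iff] at hα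

theorem card_bound_transfinite_induction (f : Ordinal → Cardinal)
    (h1 : ∀ β < (aleph 1).ord, f β ≤ aleph0)
    (h2 : ∀ β, f (β + 1) ≤ f β * aleph0)
    (h3 : ∀ α : Ordinal, Order.IsSuccLimit α → f α ≤ (⨆ β : Set.Iio α, f β.1) * α.card) :
    ∀ τ : Ordinal, ∀ α < (aleph (τ + 1)).ord, f α ≤ aleph τ := by
  intro τ α hα
  have h0 : f 0 ≤ aleph τ :=
    (h1 0 (ord_pos.2 (aleph_pos 1))).trans (aleph0_le_aleph τ)
  exact le_of_card_le_of_succ_of_isSuccLimit (aleph0_le_aleph τ) h0 h2 h3 α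
    (Ordinal.card_le_of_lt_ord_aleph_add_one hα)
end
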